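/- If A is an accretive n×n complex matrix (i.e., Re A = (A+A*)/2 is positive definite), then A is invertible and Re(A⁻¹) ≤ (Re A)⁻¹ in the Loewner order. -/

import Mathlib

open Matrix
open scoped ComplexOrder

noncomputable section
namespace Paper

variable {n : ℕ}

/-- Real part `(A + Aᴴ)/2`. -/
def re (A : Matrix (Fin n) (Fin n) ℂ) : Matrix (Fin n) (Fin n) ℂ := (2⁻¹ : ℂ) • (A + Aᴴ)

/-- Imaginary part `(A - Aᴴ)/(2i)`. -/
def im (A : Matrix (Fin n) (Fin n) ℂ) : Matrix (Fin n) (Fin n) ℂ :=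
  (2 * Complex.I)⁻¹ • (A - Aᴴ)

/-- The sector `S_α`. -/
def sector (α : ℝ) : Set ℂ := {z | 0 < z.re ∧ |z.im| ≤ z.re * Real.tan α}

/-- Numerical range of a matrix. -/
def numericalRange (A : Matrix (Fin n) (Fin n) ℂ) : Set ℂ :=
  {z | ∃ x : Fin n → ℂ, star x ⬝ᵥ x = 1 ∧ z = star x ⬝ᵥ (A *ᵥ x)}

/-- Loewner order: `X ≤ Y` iff `Y - X` is positive semidefinite. -/
def loewnerLE (X Y : Matrix (Fin n) (Fin n) ℂ) : Prop := (Y - X).PosSemidef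

lemma re_isHermitian (A : Matrix (Fin n) (Fin n) ℂ) : (re A).IsHermitian := by
  show ((2⁻¹ : ℂ) • (A + Aᴴ))ᴴ = (2⁻¹ : ℂ) • (A + Aᴴ)
  rw [Matrix.conjTranspose_smul, Matrix.conjTranspose_add,
    Matrix.conjTranspose_conjTranspose, add_comm Aᴴ A]
  simp

/-- The `j`-th largest element of `v` (descending sort). -/
def nthLargest (v : Fin n → ℝ) (j : Fin n) : ℝ :=
  ((List.ofFn v).mergeSort (fun a b => decide (b ≤ a))).get
    (Fin.cast (by simp) j)

/-- `j`-th largest eigenvalue of a Hermitian matrix. -/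
def eigDesc {A : Matrix (Fin n) (Fin n) ℂ} (hA : A.IsHermitian) (j : Fin n) : ℝ :=
  nthLargest hA.eigenvalues j

/-- `j`-th largest singular value. -/
def singular (A : Matrix (Fin n) (Fin n) ℂ) (j : Fin n) : ℝ :=
  nthLargest (fun i => Real.sqrt ((Matrix.isHermitian_conjTranspose_mul_self A).eigenvalues i)) j

/-- Square root of a positive semidefinite matrix (the old `Matrix.PosSemidef.sqrt`). -/
def psdSqrt {A : Matrix (Fin n) (Fin n) ℂ} (hA : A.PosSemidef) : Matrix (Fin n) (Fin n) ℂ :=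
  (hA.1.eigenvectorUnitary : Matrix (Fin n) (Fin n) ℂ) *
    diagonal ((↑) ∘ Real.sqrt ∘ hA.1.eigenvalues) *
    (star hA.1.eigenvectorUnitary : Matrix (Fin n) (Fin n) ℂ)

/-- Weighted geometric mean of positive definite matrices. -/
def sharp (v : ℝ) {A B : Matrix (Fin n) (Fin n) ℂ} (hA : A.PosDef) (hB : B.PosDef) :
    Matrix (Fin n) (Fin n) ℂ :=
  (psdSqrt hA.posSemidef) *
    (Matrix.isHermitian_mul_mul_conjTranspose ((psdSqrt hA.posSemidef))⁻¹ hB.1).cfc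
      (fun x => Real.rpow x v) * (psdSqrt hA.posSemidef)

/-- Weighted arithmetic mean. -/
def arith (v : ℝ) (A B : Matrix (Fin n) (Fin n) ℂ) : Matrix (Fin n) (Fin n) ℂ :=
  (1 - v) • A + v • B

/-- Weighted harmonic mean. -/
def harm (v : ℝ) (A B : Matrix (Fin n) (Fin n) ℂ) : Matrix (Fin n) (Fin n) ℂ :=
  ((1 - v) • A⁻¹ + v • B⁻¹)⁻¹

/-- Kantorovich constant. -/
def K (h : ℝ) : ℝ := (h + 1) ^ 2 / (4 * h)

/-! With `H = re A` and `B = A⁻¹` one has `re B = B * H * Bᴴ`, hence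
`H⁻¹ - re B = (1 - B * H) * H⁻¹ * (1 - B * H)ᴴ`, a congruence of the positive matrix `H⁻¹`. -/

section

variable {ι R : Type*} [Fintype ι] [DecidableEq ι] [CommRing R] [StarRing R]

lemma one_sub_mul_mul_inv_mul_conjTranspose {H : Matrix ι ι R} (hH : H.IsHermitian)
    (hdet : IsUnit H.det) (B : Matrix ι ι R) :
    (1 - B * H) * H⁻¹ * (1 - B * H)ᴴ = H⁻¹ - (B + Bᴴ) + B * H * Bᴴ := by
  rw [conjTranspose_sub, conjTranspose_one, conjTranspose_mul, hH.eq]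
  simp only [sub_mul, mul_sub, one_mul, mul_one, mul_assoc, mul_nonsing_inv _ hdet,
    nonsing_inv_mul_cancel_left _ _ hdet]
  abel

end

lemma two_smul_re (A : Matrix (Fin n) (Fin n) ℂ) : (2 : ℂ) • re A = A + Aᴴ := by
  rw [re, smul_smul, mul_inv_cancel₀ two_ne_zero, one_smul]

lemma dotProduct_re_mulVec (A : Matrix (Fin n) (Fin n) ℂ) (v : Fin n → ℂ) :
    star v ⬝ᵥ (re A *ᵥ v) = ((star v ⬝ᵥ (A *ᵥ v)).re : ℂ) := by
  have hconj : star v ⬝ᵥ (Aᴴ *ᵥ v) = star (star v ⬝ᵥ (A *ᵥ v)) := by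
    rw [dotProduct_mulVec, ← star_mulVec, star_dotProduct]
  rw [Complex.re_eq_add_conj, re, smul_mulVec, add_mulVec, dotProduct_smul, dotProduct_add,
    hconj, smul_eq_mul, Complex.star_def]
  ring

lemma isUnit_det_of_posDef_re {A : Matrix (Fin n) (Fin n) ℂ} (hA : (re A).PosDef) :
    IsUnit A.det := by
  refine isUnit_iff_ne_zero.mpr fun hdet => ?_
  obtain ⟨v, hv, hAv⟩ := exists_mulVec_eq_zero_iff.mpr hdet
  have := hA.dotProduct_mulVec_pos hv
  rw [dotProduct_re_mulVec, hAv, dotProduct_zero, Complex.zero_re, Complex.ofReal_zero] at this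
  exact this.false

lemma re_inv {A : Matrix (Fin n) (Fin n) ℂ} (hA : IsUnit A.det) :
    re A⁻¹ = A⁻¹ * re A * A⁻¹ᴴ := by
  have hAH : IsUnit Aᴴ.det := by rw [det_conjTranspose]; exact hA.star
  rw [re, re, conjTranspose_nonsing_inv, mul_smul_comm, smul_mul_assoc, mul_add, add_mul,
    nonsing_inv_mul _ hA, one_mul, mul_assoc, mul_nonsing_inv _ hAH, mul_one, add_comm]

/-- Lin's inequality `Re (A⁻¹) ≤ (Re A)⁻¹` for accretive `A`. -/
theorem re_inv_le_inv_re (A : Matrix (Fin n) (Fin n) ℂ) (hA : (re A).PosDef) :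
    IsUnit A.det ∧ loewnerLE (re A⁻¹) (re A)⁻¹ := by
  have hdet := isUnit_det_of_posDef_re hA
  refine ⟨hdet, ?_⟩
  have hcongr : (re A)⁻¹ - re A⁻¹ = (1 - A⁻¹ * re A) * (re A)⁻¹ * (1 - A⁻¹ * re A)ᴴ := by
    rw [one_sub_mul_mul_inv_mul_conjTranspose (re_isHermitian A)
      ((isUnit_iff_isUnit_det _).mp hA.isUnit), ← re_inv hdet, ← two_smul_re, two_smul]
    abel
  rw [loewnerLE, hcongr]
  exact hA.posSemidef.inv.mul_mul_conjTranspose_same _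

end Paper
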